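/- arXiv:2603.25915 — 2 statements merged into one kernel-verified Lean document; each statement's English description precedes it below -/
import Mathlib

section
/- If g ≥ 4p_k + 6 and a gap of size g between consecutive primes begins at a point x with p_k² ≤ x ≤ p_k² + 2p_k (early in the interval of survival), then there exists an integer n with p_k ≤ n < p_k + g such that the interval [n², (n+1)²] contains no prime. -/
theorem large_gap_early_covers_quadratic_interval_general (p g q : ℕ)
    (hg : 4 * p + 6 ≤ g)
    (hcons : ∀ m, q < m → m < q + g → ¬ m.Prime)
    (hx1 : p ^ 2 ≤ q) (hx2 : q ≤ p ^ 2 + 2 * p) :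
    ∃ n, p ≤ n ∧ n < p + g ∧ ∀ m, n ^ 2 ≤ m → m ≤ (n + 1) ^ 2 → ¬ m.Prime := by
  -- [(p+1)², (p+2)²] = [p² + 2p + 1, p² + 4p + 4] sits strictly inside the gap (q, q + g).
  refine ⟨p + 1, by omega, by omega, fun m hm_lo hm_hi => hcons m ?_ ?_⟩
  · nlinarith
  · nlinarith

/-- A gap g ≥ 4p + 6 between consecutive primes beginning early in the interval
of survival [p², p² + 2p] forces some quadratic interval [n², (n+1)²] with
p ≤ n < p + g to contain no prime. -/
theorem large_gap_early_covers_quadratic_interval (p g q : ℕ) (hp : p.Prime)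
    (hg : 4 * p + 6 ≤ g) (hq : q.Prime) (hq' : (q + g).Prime)
    (hcons : ∀ m, q < m → m < q + g → ¬ m.Prime)
    (hx1 : p ^ 2 ≤ q) (hx2 : q ≤ p ^ 2 + 2 * p) :
    ∃ n, p ≤ n ∧ n < p + g ∧ ∀ m, n ^ 2 ≤ m → m ≤ (n + 1) ^ 2 → ¬ m.Prime :=
  large_gap_early_covers_quadratic_interval_general p g q hg hcons hx1 hx2
end

section
/- Let p_{k−1} < p_k < p_{k+1} be positive reals, g_2 = p_k − p_{k−1}, g_3 = p_{k+1} − p_k, J ≥ 1 a natural number, δ ≥ 0 a real, and suppose n_{J}, n_{J}' satisfy n_J' = (p_k − J − 1)·n_J + δ·n_J with n_J > 0. Define the quadratic density ratio R = (1/p_k)·((p_{k+1}+p_k)/(p_k+p_{k−1}))·((p_k − J − 1) + δ). Then R ≥ 1 if and only if g_2 + g_3 ≥ (J + 1 − δ)·(2 + g_3/p_k). -/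
/-!
Clearing the positive denominators `p (p + a)` and `p` turns both sides into polynomial
inequalities, and these coincide because of the identity
`(b + p)(p - c) - p(p + a) = p(b - a) - c(b + p)`, applied with `c = J + 1 - δ`.
-/

lemma one_le_inv_mul_div_mul_sub_iff {p a b c : ℝ} (hp : 0 < p) (hpa : 0 < p + a) :
    1 ≤ (1 / p) * ((b + p) / (p + a)) * (p - c) ↔ p * (p + a) ≤ (b + p) * (p - c) := by
  have hden : 0 < p * (p + a) := mul_pos hp hpa
  rw [show (1 / p) * ((b + p) / (p + a)) * (p - c) = (b + p) * (p - c) / (p * (p + a)) by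
    field_simp, one_le_div hden]

lemma mul_two_add_div_le_iff {p a b c : ℝ} (hp : 0 < p) :
    c * (2 + (b - p) / p) ≤ (p - a) + (b - p) ↔ c * (b + p) ≤ p * (b - a) := by
  rw [show c * (2 + (b - p) / p) = c * (b + p) / p by field_simp; ring, div_le_iff₀ hp]
  constructor <;> intro h <;> linarith

lemma one_le_inv_mul_div_mul_sub_iff_mul_two_add_div_le {p a b c : ℝ} (hp : 0 < p)
    (hpa : 0 < p + a) :
    1 ≤ (1 / p) * ((b + p) / (p + a)) * (p - c) ↔
      c * (2 + (b - p) / p) ≤ (p - a) + (b - p) := by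
  rw [one_le_inv_mul_div_mul_sub_iff hp hpa, mul_two_add_div_le_iff hp]
  have key : (b + p) * (p - c) - p * (p + a) = p * (b - a) - c * (b + p) := by ring
  constructor <;> intro h <;> linarith

theorem quadratic_density_ratio_ge_one_iff_general (J : ℕ)
    (pm p pp δ : ℝ) (h0 : 0 < pm) (h1 : pm < p) :
    1 ≤ (1 / p) * ((pp + p) / (p + pm)) * ((p - J - 1) + δ) ↔
      ((J : ℝ) + 1 - δ) * (2 + (pp - p) / p) ≤ (p - pm) + (pp - p) := by
  have hp : 0 < p := h0.trans h1
  rw [show (p - J - 1) + δ = p - ((J : ℝ) + 1 - δ) by ring]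
  exact one_le_inv_mul_div_mul_sub_iff_mul_two_add_div_le hp (by linarith)

/-- Lemma 3 of the paper: the quadratic-density ratio
R = (1/p_k)·((p_{k+1}+p_k)/(p_k+p_{k−1}))·((p_k − J − 1) + δ) satisfies R ≥ 1
iff g₂ + g₃ ≥ (J + 1 − δ)·(2 + g₃/p_k). -/
theorem quadratic_density_ratio_ge_one_iff (J : ℕ) (hJ : 1 ≤ J)
    (pm p pp δ nJ nJ' : ℝ) (h0 : 0 < pm) (h1 : pm < p) (h2 : p < pp)
    (hδ : 0 ≤ δ) (hn : 0 < nJ) (hrec : nJ' = (p - J - 1) * nJ + δ * nJ) :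
    1 ≤ (1 / p) * ((pp + p) / (p + pm)) * ((p - J - 1) + δ) ↔
      ((J : ℝ) + 1 - δ) * (2 + (pp - p) / p) ≤ (p - pm) + (pp - p) :=
  quadratic_density_ratio_ge_one_iff_general J pm p pp δ h0 h1
end
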